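/- arXiv:2009.09908 — 2 statements merged into one kernel-verified Lean document; each statement's English description precedes it below -/
import Mathlib

section
/- For every fixed z ∈ ℝ^n and every τ > 0, the full-coordinates oracle satisfies ‖E[g_f(z,τ,ξ)] − F(z)‖_q ≤ √n L τ + 2 √n Δ/τ, where the expectation is over ξ. -/
open MeasureTheory Real Finset
open scoped RealInnerProductSpace

noncomputable section

/-- `ℝ^n` with the Euclidean structure. -/
abbrev Esp (n : ℕ) := EuclideanSpace ℝ (Fin n)

/-- `ℝ^{n_x} × ℝ^{n_y}` with the Euclidean (ℓ₂-product) structure. -/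
abbrev Zsp (nx ny : ℕ) := WithLp 2 (Esp nx × Esp ny)

/-- Pairing `(x, y) ∈ ℝ^{n_x} × ℝ^{n_y} = ℝ^n`. -/
def mkZ {nx ny : ℕ} (x : Esp nx) (y : Esp ny) : Zsp nx ny := (WithLp.equiv 2 _).symm (x, y)

/-- The ℓ_q "norm" `(∑ i, |z_i|^q)^{1/q}` on `ℝ^n = ℝ^{n_x} × ℝ^{n_y}`. -/
def lqN (q : ℝ) {nx ny : ℕ} (z : Zsp nx ny) : ℝ :=
  ((∑ i, |z.fst i| ^ q) + ∑ j, |z.snd j| ^ q) ^ (1 / q)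

/-- The saddle-point operator `F(x,y) = (∇_x f(x,y), −∇_y f(x,y))`. -/
def sadOp {nx ny : ℕ} (f : Zsp nx ny → ℝ) (z : Zsp nx ny) : Zsp nx ny :=
  mkZ (gradient (fun x => f (mkZ x z.snd)) z.fst) (-(gradient (fun y => f (mkZ z.fst y)) z.snd))

/-- The full-coordinates zeroth-order oracle
`g_f(z,τ,ξ) = (1/τ) ∑_{i≤n_x} (f̃(z+τh_i,ξ) − f̃(z,ξ)) h_i
            + (1/τ) ∑_{i>n_x} (f̃(z,ξ) − f̃(z+τh_i,ξ)) h_i`,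
written componentwise in `ℝ^{n_x} × ℝ^{n_y}`. -/
def gfOr {nx ny : ℕ} {Ξ : Type*} (ftil : Zsp nx ny → Ξ → ℝ) (z : Zsp nx ny) (τ : ℝ)
    (ξv : Ξ) : Zsp nx ny :=
  mkZ (WithLp.toLp 2 (fun i => (ftil (mkZ (z.fst + τ • EuclideanSpace.single i 1) z.snd) ξv - ftil z ξv) / τ))
      (WithLp.toLp 2 (fun j => (ftil z ξv - ftil (mkZ z.fst (z.snd + τ • EuclideanSpace.single j 1)) ξv) / τ))

/-! Coordinatewise, `E[g_f(z,τ,ξ)] − F(z)` is the forward difference quotient of `f + δ` along a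
basis vector `h_i` minus the directional derivative `f'(z) h_i` (both with the sign flipped on the
`y`-block, as in `F`). Lipschitz continuity of `F` makes `t ↦ f'(z + t h_i) h_i` drift by at most
`L t`, so the Taylor remainder over `[0, τ]` is at most `L τ² / 2`, while the perturbation `δ`
contributes at most `2Δ/τ`. Each coordinate of the bias is therefore at most `Lτ + 2Δ/τ`, and a
vector of `ℝ^n` with coordinates so bounded has ℓ_q norm at most `n^{1/q} ≤ √n` times that. -/

section
variable {E : Type*} [NormedAddCommGroup E] [NormedSpace ℝ E] {f : E → ℝ}

theorem abs_sub_sub_mul_fderiv_le (hf : Differentiable ℝ f) (z e : E) {L τ : ℝ} (hτ : 0 ≤ τ)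
    (hL : ∀ t ∈ Set.Ico 0 τ, |fderiv ℝ f (z + t • e) e - fderiv ℝ f z e| ≤ L * t) :
    |f (z + τ • e) - f z - τ * fderiv ℝ f z e| ≤ L / 2 * τ ^ 2 := by
  have hderiv : ∀ t : ℝ, HasDerivAt (fun s => f (z + s • e) - f z - s * fderiv ℝ f z e)
      (fderiv ℝ f (z + t • e) e - fderiv ℝ f z e) t := by
    intro t
    have hline : HasDerivAt (fun s : ℝ => z + s • e) e t := by
      simpa using ((hasDerivAt_id t).smul_const e).const_add z
    have := (((hf _).hasFDerivAt.comp_hasDerivAt t hline).sub_const (f z)).sub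
      ((hasDerivAt_id t).mul_const (fderiv ℝ f z e))
    rw [one_mul] at this
    exact this
  have hB : ∀ t : ℝ, HasDerivAt (fun s => L / 2 * s ^ 2) (L * t) t := fun t =>
    ((hasDerivAt_pow 2 t).const_mul (L / 2)).congr_deriv (by norm_num; ring)
  simpa using image_norm_le_of_norm_deriv_right_le_deriv_boundary
    (fun t _ => (hderiv t).continuousAt.continuousWithinAt)
    (fun t _ => (hderiv t).hasDerivWithinAt) (by simp) hB hL ⟨hτ, le_rfl⟩

theorem abs_perturbed_slope_sub_le {a b D δ₁ δ₀ L Δ τ : ℝ} (hτ : 0 < τ)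
    (hT : |a - b - τ * D| ≤ L / 2 * τ ^ 2) (h₁ : |δ₁| ≤ Δ) (h₀ : |δ₀| ≤ Δ) :
    |((a + δ₁) - (b + δ₀)) / τ - D| ≤ L * τ + 2 * Δ / τ := by
  have hL : 0 ≤ L / 2 := nonneg_of_mul_nonneg_left ((abs_nonneg _).trans hT) (by positivity)
  calc |((a + δ₁) - (b + δ₀)) / τ - D|
      = |(a - b - τ * D) / τ + (δ₁ - δ₀) / τ| := by congr 1; field_simp; ring
    _ ≤ |a - b - τ * D| / τ + |δ₁ - δ₀| / τ := by
        simpa only [abs_div, abs_of_pos hτ] using abs_add_le ((a - b - τ * D) / τ) ((δ₁ - δ₀) / τ)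
    _ ≤ L / 2 * τ ^ 2 / τ + (Δ + Δ) / τ := by
        gcongr
        exact (abs_sub _ _).trans (add_le_add h₁ h₀)
    _ = L / 2 * τ + 2 * Δ / τ := by field_simp; ring
    _ ≤ L * τ + 2 * Δ / τ := by nlinarith

theorem abs_perturbed_slope_sub_fderiv_le {δ : E → ℝ} (hf : Differentiable ℝ f) {z e : E}
    (he : ‖e‖ = 1) {L Δ τ : ℝ} (hτ : 0 < τ)
    (hLip : ∀ x, |fderiv ℝ f x e - fderiv ℝ f z e| ≤ L * ‖x - z‖) (hδ : ∀ x, |δ x| ≤ Δ) :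
    |((f (z + τ • e) + δ (z + τ • e)) - (f z + δ z)) / τ - fderiv ℝ f z e|
      ≤ L * τ + 2 * Δ / τ := by
  refine abs_perturbed_slope_sub_le hτ (abs_sub_sub_mul_fderiv_le hf z e hτ.le fun t ht => ?_)
    (hδ _) (hδ _)
  simpa [norm_smul, he, abs_of_nonneg ht.1] using hLip (z + t • e)

end

theorem EuclideanSpace.gradient_apply {ι : Type*} [Fintype ι] [DecidableEq ι]
    (g : EuclideanSpace ℝ ι → ℝ) (x : EuclideanSpace ℝ ι) (i : ι) :
    gradient g x i = fderiv ℝ g x (EuclideanSpace.single i 1) := by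
  rw [← inner_gradient_left, EuclideanSpace.inner_single_right]
  simp

section
variable {nx ny : ℕ}

def unitFst (i : Fin nx) : Zsp nx ny := mkZ (EuclideanSpace.single i 1) 0

def unitSnd (j : Fin ny) : Zsp nx ny := mkZ 0 (EuclideanSpace.single j 1)

theorem norm_unitFst (i : Fin nx) : ‖(unitFst i : Zsp nx ny)‖ = 1 := by
  simp [unitFst, mkZ]

theorem norm_unitSnd (j : Fin ny) : ‖(unitSnd j : Zsp nx ny)‖ = 1 := by
  simp [unitSnd, mkZ]

theorem gfOr_fst_apply {Ξ : Type*} (ftil : Zsp nx ny → Ξ → ℝ) (z : Zsp nx ny) (τ : ℝ) (ξ : Ξ)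
    (i : Fin nx) :
    (gfOr ftil z τ ξ).fst i = (ftil (z + τ • unitFst i) ξ - ftil z ξ) / τ := by
  have : mkZ (z.fst + τ • EuclideanSpace.single i 1) z.snd = z + τ • unitFst i := by
    refine WithLp.ofLp_injective 2 (Prod.ext ?_ ?_) <;> simp [mkZ, unitFst]
  rw [← this]
  rfl

theorem gfOr_snd_apply {Ξ : Type*} (ftil : Zsp nx ny → Ξ → ℝ) (z : Zsp nx ny) (τ : ℝ) (ξ : Ξ)
    (j : Fin ny) :
    (gfOr ftil z τ ξ).snd j = (ftil z ξ - ftil (z + τ • unitSnd j) ξ) / τ := by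
  have : mkZ z.fst (z.snd + τ • EuclideanSpace.single j 1) = z + τ • unitSnd j := by
    refine WithLp.ofLp_injective 2 (Prod.ext ?_ ?_) <;> simp [mkZ, unitSnd]
  rw [← this]
  rfl

theorem fderiv_comp_mkZ_left {f : Zsp nx ny → ℝ} {z : Zsp nx ny} (hf : DifferentiableAt ℝ f z)
    (v : Esp nx) : fderiv ℝ (fun x => f (mkZ x z.snd)) z.fst v = fderiv ℝ f z (mkZ v 0) := by
  have hmk : HasFDerivAt (fun x : Esp nx => mkZ x z.snd)
      ((WithLp.prodContinuousLinearEquiv 2 ℝ _ _).symm.toContinuousLinearMap.comp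
        (ContinuousLinearMap.inl ℝ (Esp nx) (Esp ny))) z.fst :=
    (WithLp.prodContinuousLinearEquiv 2 ℝ (Esp nx) (Esp ny)).symm.hasFDerivAt.comp z.fst
      (hasFDerivAt_prodMk_left z.fst z.snd)
  exact DFunLike.congr_fun (hf.hasFDerivAt.comp z.fst hmk).fderiv v

theorem fderiv_comp_mkZ_right {f : Zsp nx ny → ℝ} {z : Zsp nx ny} (hf : DifferentiableAt ℝ f z)
    (v : Esp ny) : fderiv ℝ (fun y => f (mkZ z.fst y)) z.snd v = fderiv ℝ f z (mkZ 0 v) := by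
  have hmk : HasFDerivAt (fun y : Esp ny => mkZ z.fst y)
      ((WithLp.prodContinuousLinearEquiv 2 ℝ _ _).symm.toContinuousLinearMap.comp
        (ContinuousLinearMap.inr ℝ (Esp nx) (Esp ny))) z.snd :=
    (WithLp.prodContinuousLinearEquiv 2 ℝ (Esp nx) (Esp ny)).symm.hasFDerivAt.comp z.snd
      (hasFDerivAt_prodMk_right z.fst z.snd)
  exact DFunLike.congr_fun (hf.hasFDerivAt.comp z.snd hmk).fderiv v

theorem sadOp_fst_apply {f : Zsp nx ny → ℝ} {z : Zsp nx ny} (hf : DifferentiableAt ℝ f z)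
    (i : Fin nx) : (sadOp f z).fst i = fderiv ℝ f z (unitFst i) := by
  rw [unitFst, ← fderiv_comp_mkZ_left hf, ← EuclideanSpace.gradient_apply]
  rfl

theorem sadOp_snd_apply {f : Zsp nx ny → ℝ} {z : Zsp nx ny} (hf : DifferentiableAt ℝ f z)
    (j : Fin ny) : (sadOp f z).snd j = -fderiv ℝ f z (unitSnd j) := by
  rw [unitSnd, ← fderiv_comp_mkZ_right hf, ← EuclideanSpace.gradient_apply]
  rfl

theorem abs_fderiv_unitFst_sub_le {f : Zsp nx ny → ℝ} (hf : Differentiable ℝ f) (x z : Zsp nx ny)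
    (i : Fin nx) :
    |fderiv ℝ f x (unitFst i) - fderiv ℝ f z (unitFst i)| ≤ ‖sadOp f x - sadOp f z‖ := by
  rw [← sadOp_fst_apply (hf x), ← sadOp_fst_apply (hf z), ← Real.norm_eq_abs]
  exact (PiLp.norm_apply_le (sadOp f x - sadOp f z).fst i).trans (WithLp.norm_fst_le _ _)

theorem abs_fderiv_unitSnd_sub_le {f : Zsp nx ny → ℝ} (hf : Differentiable ℝ f) (x z : Zsp nx ny)
    (j : Fin ny) :
    |fderiv ℝ f x (unitSnd j) - fderiv ℝ f z (unitSnd j)| ≤ ‖sadOp f x - sadOp f z‖ := by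
  rw [← abs_neg, neg_sub', ← sadOp_snd_apply (hf x), ← sadOp_snd_apply (hf z), ← Real.norm_eq_abs]
  exact (PiLp.norm_apply_le (sadOp f x - sadOp f z).snd j).trans (WithLp.norm_snd_le _ _)

theorem integral_gfOr_fst {Ω : Type*} [MeasurableSpace Ω] {μ : Measure Ω}
    {ftil : Zsp nx ny → Ω → ℝ} {z : Zsp nx ny} {τ : ℝ} (hint : ∀ z', Integrable (ftil z') μ)
    (hg : Integrable (gfOr ftil z τ) μ) (i : Fin nx) :
    (∫ ω, gfOr ftil z τ ω ∂μ).fst i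
      = (∫ ω, ftil (z + τ • unitFst i) ω ∂μ - ∫ ω, ftil z ω ∂μ) / τ := by
  rw [← integral_sub (hint _) (hint _), ← integral_div]
  simp_rw [← gfOr_fst_apply]
  exact (((EuclideanSpace.proj i).comp (WithLp.fstL 2 ℝ _ _)).integral_comp_comm hg).symm

theorem integral_gfOr_snd {Ω : Type*} [MeasurableSpace Ω] {μ : Measure Ω}
    {ftil : Zsp nx ny → Ω → ℝ} {z : Zsp nx ny} {τ : ℝ} (hint : ∀ z', Integrable (ftil z') μ)
    (hg : Integrable (gfOr ftil z τ) μ) (j : Fin ny) :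
    (∫ ω, gfOr ftil z τ ω ∂μ).snd j
      = (∫ ω, ftil z ω ∂μ - ∫ ω, ftil (z + τ • unitSnd j) ω ∂μ) / τ := by
  rw [← integral_sub (hint _) (hint _), ← integral_div]
  simp_rw [← gfOr_snd_apply]
  exact (((EuclideanSpace.proj j).comp (WithLp.sndL 2 ℝ _ _)).integral_comp_comm hg).symm

theorem lqN_le_sqrt_mul_of_abs_le {q : ℝ} (hq : 2 ≤ q) {w : Zsp nx ny} {B : ℝ}
    (hfst : ∀ i, |w.fst i| ≤ B) (hsnd : ∀ j, |w.snd j| ≤ B) :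
    lqN q w ≤ √(nx + ny : ℝ) * B := by
  have hq0 : 0 < q := by linarith
  obtain hn | hn := Nat.eq_zero_or_pos (nx + ny)
  -- without coordinates `B` may be negative, but then both sides vanish
  · obtain ⟨rfl, rfl⟩ : nx = 0 ∧ ny = 0 := by omega
    simp [lqN, hq0.ne']
  have hB : 0 ≤ B := by
    rcases Nat.eq_zero_or_pos nx with hx | hx
    · exact (abs_nonneg _).trans (hsnd ⟨0, by omega⟩)
    · exact (abs_nonneg _).trans (hfst ⟨0, hx⟩)
  have hn1 : (1 : ℝ) ≤ nx + ny := by exact_mod_cast hn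
  have hsum : ∀ {m : ℕ} (v : Esp m), (∀ i, |v i| ≤ B) → ∑ i, |v i| ^ q ≤ m * B ^ q :=
    fun v hv => (Finset.sum_le_sum fun i _ => rpow_le_rpow (abs_nonneg _) (hv i) hq0.le).trans_eq
      (by simp)
  calc lqN q w ≤ ((nx + ny : ℝ) * B ^ q) ^ (1 / q) := by
        unfold lqN
        gcongr
        linarith [hsum _ hfst, hsum _ hsnd]
    _ = (nx + ny : ℝ) ^ (1 / q) * B := by
        rw [mul_rpow (by positivity) (by positivity), ← rpow_mul hB, mul_one_div_cancel hq0.ne',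
          rpow_one]
    _ ≤ √(nx + ny : ℝ) * B := by
        rw [sqrt_eq_rpow]
        gcongr

end

theorem full_coordinates_bias_general {nx ny : ℕ}
    (q : ℝ) (hq : 2 ≤ q)
    {Ω : Type*} [MeasurableSpace Ω] (μ : Measure Ω) [IsProbabilityMeasure μ]
    (fsto : Zsp nx ny → Ω → ℝ)
    (fdet : Zsp nx ny → ℝ) (hfdet : Differentiable ℝ fdet)
    (Δ L : ℝ) (δ : Zsp nx ny → ℝ) (hδ : ∀ z, |δ z| ≤ Δ)
    (hfunb : ∀ z, ∫ ω, fsto z ω ∂μ = fdet z)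
    (hfInt : ∀ z, Integrable (fun ω => fsto z ω) μ)
    (hLip : ∀ z1 z2, ‖sadOp fdet z1 - sadOp fdet z2‖ ≤ L * ‖z1 - z2‖)
    (z : Zsp nx ny) (τ : ℝ) (hτ : 0 < τ)
    (horInt : Integrable (fun ω => gfOr (fun z' ω' => fsto z' ω' + δ z') z τ ω) μ) :
    lqN q ((∫ ω, gfOr (fun z' ω' => fsto z' ω' + δ z') z τ ω ∂μ) - sadOp fdet z) ≤
      Real.sqrt (nx + ny : ℝ) * L * τ + 2 * Real.sqrt (nx + ny : ℝ) * Δ / τ := by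
  set ftil : Zsp nx ny → Ω → ℝ := fun z' ω => fsto z' ω + δ z'
  have hint : ∀ z', Integrable (ftil z') μ := fun z' => (hfInt z').add (integrable_const _)
  have hmean : ∀ z', ∫ ω, ftil z' ω ∂μ = fdet z' + δ z' := fun z' => by
    simp [ftil, integral_add (hfInt z') (integrable_const _), hfunb]
  have hcoord : ∀ e : Zsp nx ny, ‖e‖ = 1 →
      (∀ x, |fderiv ℝ fdet x e - fderiv ℝ fdet z e| ≤ ‖sadOp fdet x - sadOp fdet z‖) →
      |((fdet (z + τ • e) + δ (z + τ • e)) - (fdet z + δ z)) / τ - fderiv ℝ fdet z e|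
        ≤ L * τ + 2 * Δ / τ := fun e he hcmp =>
    abs_perturbed_slope_sub_fderiv_le hfdet he hτ (fun x => (hcmp x).trans (hLip x z)) hδ
  refine (lqN_le_sqrt_mul_of_abs_le hq (B := L * τ + 2 * Δ / τ) (fun i => ?_)
    (fun j => ?_)).trans_eq (by ring)
  · rw [WithLp.sub_fst, PiLp.sub_apply, integral_gfOr_fst hint horInt, hmean, hmean,
      sadOp_fst_apply (hfdet z)]
    exact hcoord _ (norm_unitFst i) (abs_fderiv_unitFst_sub_le hfdet · z i)
  · rw [WithLp.sub_snd, PiLp.sub_apply, integral_gfOr_snd hint horInt, hmean, hmean,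
      sadOp_snd_apply (hfdet z), ← abs_neg]
    convert hcoord _ (norm_unitSnd j) (abs_fderiv_unitSnd_sub_le hfdet · z j) using 2
    ring

/-- Bias bound for the full-coordinates oracle:
`‖E[g_f(z,τ,ξ)] − F(z)‖_q ≤ √n L τ + 2 √n Δ/τ`. -/
theorem full_coordinates_bias {nx ny : ℕ} (hnx : 1 ≤ nx) (hny : 1 ≤ ny)
    (q : ℝ) (hq : 2 ≤ q)
    {Ω : Type*} [MeasurableSpace Ω] (μ : Measure Ω) [IsProbabilityMeasure μ]
    (fsto : Zsp nx ny → Ω → ℝ) (hfsto : ∀ ω, Differentiable ℝ (fun z => fsto z ω))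
    (fdet : Zsp nx ny → ℝ) (hfdet : Differentiable ℝ fdet)
    (Δ L : ℝ) (δ : Zsp nx ny → ℝ) (hδ : ∀ z, |δ z| ≤ Δ)
    (hfunb : ∀ z, ∫ ω, fsto z ω ∂μ = fdet z)
    (hfInt : ∀ z, Integrable (fun ω => fsto z ω) μ)
    (hFunb : ∀ z, ∫ ω, (sadOp (fun z' => fsto z' ω) z) ∂μ = sadOp fdet z)
    (hLip : ∀ z1 z2, ‖sadOp fdet z1 - sadOp fdet z2‖ ≤ L * ‖z1 - z2‖)
    (z : Zsp nx ny) (τ : ℝ) (hτ : 0 < τ)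
    (horInt : Integrable (fun ω => gfOr (fun z' ω' => fsto z' ω' + δ z') z τ ω) μ) :
    lqN q ((∫ ω, gfOr (fun z' ω' => fsto z' ω' + δ z') z τ ω ∂μ) - sadOp fdet z) ≤
      Real.sqrt (nx + ny : ℝ) * L * τ + 2 * Real.sqrt (nx + ny : ℝ) * Δ / τ :=
  full_coordinates_bias_general q hq μ fsto fdet hfdet Δ L δ hδ hfunb hfInt hLip z τ hτ horInt
end
end

section
/- Let z ∈ Z, let g, g_{1/2} ∈ ℝ^n, and set z_{1/2} = prox_z(g) and z_1 = prox_z(g_{1/2}). Then for all u ∈ Z: ⟨g_{1/2}, z_{1/2} − u⟩ ≤ V(z, u) − V(z_1, u) + (1/2)‖g − g_{1/2}‖_q² − V(z, z_{1/2}). -/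
/-!
Write `V` for the Bregman divergence of `d`. The first-order optimality condition of
`w = prox_z(g)`, rewritten with the three-point identity for `V`, reads
`⟨g, w - u⟩ ≤ V(z,u) - V(w,u) - V(z,w)` for all `u ∈ Z`. Using it for `z₁` at `u` and for
`z_{1/2}` at `z₁` leaves the error `⟨g - g_{1/2}, z₁ - z_{1/2}⟩ - V(z_{1/2}, z₁)`. Hölder and
Young bound the inner product by `½‖g - g_{1/2}‖_q² + ½‖z₁ - z_{1/2}‖_p²`, and strong convexity
gives `V(z_{1/2}, z₁) ≥ ½‖z₁ - z_{1/2}‖_p²`.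
-/

open MeasureTheory Real
open scoped RealInnerProductSpace

noncomputable section

/-- The ℓ_r "norm" `(∑ i, |x i|^r)^(1/r)` on `ℝ^n`, for a real exponent `r`. -/
def lrNorm {n : ℕ} (r : ℝ) (x : EuclideanSpace ℝ (Fin n)) : ℝ := (∑ i, |x i| ^ r) ^ (1 / r)

open Set

section Bregman

variable {E : Type*} [NormedAddCommGroup E] [InnerProductSpace ℝ E] [CompleteSpace E]
  {d : E → ℝ} {d' : E → E}

def bregmanDiv (d : E → ℝ) (d' : E → E) (z w : E) : ℝ := d w - d z - ⟪d' z, w - z⟫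

omit [CompleteSpace E] in
lemma bregmanDiv_sub_bregmanDiv_sub_bregmanDiv (z w u : E) :
    bregmanDiv d d' z u - bregmanDiv d d' w u - bregmanDiv d d' z w = ⟪d' w - d' z, u - w⟫ := by
  simp only [bregmanDiv, inner_sub_left, inner_sub_right]
  ring

lemma hasFDerivAt_bregmanDiv {z w : E} (hd : HasGradientAt d (d' w) w) :
    HasFDerivAt (bregmanDiv d d' z) (innerSL ℝ (d' w - d' z)) w := by
  have hinner : HasFDerivAt (fun x ↦ ⟪d' z, x - z⟫) (innerSL ℝ (d' z)) w :=
    (innerSL ℝ (d' z)).hasFDerivAt.comp w ((hasFDerivAt_id w).sub_const z)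
  exact ((hd.hasFDerivAt.sub_const (d z)).sub hinner).congr_fderiv (by ext v; simp)

omit [CompleteSpace E] in
lemma IsMinOn.inner_nonneg_of_hasFDerivAt {F : E → ℝ} {F' w u : E} {s : Set E}
    (hs : Convex ℝ s) (hmin : IsMinOn F s w) (hw : w ∈ s) (hu : u ∈ s)
    (hF : HasFDerivAt F (innerSL ℝ F') w) : 0 ≤ ⟪F', u - w⟫ := by
  simpa using hmin.localize.hasFDerivWithinAt_nonneg hF.hasFDerivWithinAt
    (sub_mem_posTangentConeAt_of_segment_subset (hs.segment_subset hw hu))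

lemma inner_sub_le_bregmanDiv_of_isMinOn {s : Set E} (hs : Convex ℝ s) {z g w u : E}
    (hmin : IsMinOn (fun u ↦ bregmanDiv d d' z u + ⟪g, u⟫) s w) (hw : w ∈ s) (hu : u ∈ s)
    (hd : HasGradientAt d (d' w) w) :
    ⟪g, w - u⟫ ≤ bregmanDiv d d' z u - bregmanDiv d d' w u - bregmanDiv d d' z w := by
  have hF :
      HasFDerivAt (fun u ↦ bregmanDiv d d' z u + ⟪g, u⟫) (innerSL ℝ (d' w - d' z + g)) w :=
    ((hasFDerivAt_bregmanDiv hd).add (innerSL ℝ g).hasFDerivAt).congr_fderiv (by ext v; simp)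
  have hfirstOrder := hmin.inner_nonneg_of_hasFDerivAt hs hw hu hF
  rw [bregmanDiv_sub_bregmanDiv_sub_bregmanDiv, ← neg_sub u w, inner_neg_right]
  rw [inner_add_left] at hfirstOrder
  linarith

lemma half_le_bregmanDiv {w u : E} {N : ℝ} (hd : HasGradientAt d (d' w) w)
    (hsc : ∀ t ∈ Icc (0 : ℝ) 1,
      d (t • u + (1 - t) • w) ≤ t * d u + (1 - t) * d w - t * (1 - t) / 2 * N) :
    N / 2 ≤ bregmanDiv d d' w u := by
  -- `ψ ≤ ψ 0` on `[0, 1]` is the strong convexity inequality along the segment from `w` to `u`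
  set ψ : ℝ → ℝ := fun t ↦ d (w + t • (u - w)) - t * (d u - d w) + t * (1 - t) / 2 * N
  have hψ : HasDerivAt ψ (⟪d' w, u - w⟫ - (d u - d w) + N / 2) 0 := by
    have hline : HasDerivAt (fun t : ℝ ↦ d (w + t • (u - w))) ⟪d' w, u - w⟫ 0 :=
      hd.hasFDerivAt.hasLineDerivAt (u - w)
    have hpoly : HasDerivAt (fun t : ℝ ↦ t * (1 - t) / 2 * N) (N / 2) 0 :=
      ((((hasDerivAt_id' 0).mul ((hasDerivAt_const 0 1).sub (hasDerivAt_id' 0))).div_const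
        2).mul_const N).congr_deriv (by ring)
    exact ((hline.sub ((hasDerivAt_id' 0).mul_const (d u - d w))).add hpoly).congr_deriv
      (by ring)
  have hmax : IsMaxOn ψ (Icc 0 1) 0 := fun t ht ↦ by
    have hsc_t := hsc t ht
    show ψ t ≤ ψ 0
    simp only [ψ, zero_smul, add_zero, zero_mul, sub_zero, zero_div]
    rw [show w + t • (u - w) = t • u + (1 - t) • w by module]
    linarith
  have hderiv := hmax.localize.hasFDerivWithinAt_nonpos hψ.hasFDerivAt.hasFDerivWithinAt
    (sub_mem_posTangentConeAt_of_segment_subset (segment_eq_Icc zero_le_one).le)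
  simp only [sub_zero, ContinuousLinearMap.toSpanSingleton_apply, smul_eq_mul, one_mul] at hderiv
  unfold bregmanDiv
  linarith

end Bregman

lemma inner_le_lrNorm_mul_lrNorm {n : ℕ} {p q : ℝ} (hpq : p.HolderConjugate q)
    (x y : EuclideanSpace ℝ (Fin n)) : ⟪x, y⟫ ≤ lrNorm p x * lrNorm q y := by
  simpa [lrNorm, PiLp.inner_apply, mul_comm] using Real.inner_le_Lp_mul_Lq Finset.univ x y hpq

theorem prox_extragradient_lemma_general {n : ℕ} (Z : Set (EuclideanSpace ℝ (Fin n)))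
    (hZconvex : Convex ℝ Z)
    (p q : ℝ) (hq : 2 ≤ q) (hpq : 1 / p + 1 / q = 1)
    (d : EuclideanSpace ℝ (Fin n) → ℝ) (d' : EuclideanSpace ℝ (Fin n) → EuclideanSpace ℝ (Fin n))
    (hd : ∀ x, HasGradientAt d (d' x) x)
    (hdsc : ∀ z1 ∈ Z, ∀ z2 ∈ Z, ∀ t : ℝ, t ∈ Set.Icc (0 : ℝ) 1 →
      d (t • z1 + (1 - t) • z2) ≤
        t * d z1 + (1 - t) * d z2 - t * (1 - t) / 2 * lrNorm p (z1 - z2) ^ 2)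
    (V : EuclideanSpace ℝ (Fin n) → EuclideanSpace ℝ (Fin n) → ℝ)
    (hV : ∀ z w, V z w = d w - d z - ⟪d' z, w - z⟫)
    (z : EuclideanSpace ℝ (Fin n)) (g ghalf : EuclideanSpace ℝ (Fin n))
    (zhalf : EuclideanSpace ℝ (Fin n)) (hzhalfZ : zhalf ∈ Z)
    (hzhalf : ∀ u ∈ Z, V z zhalf + ⟪g, zhalf⟫ ≤ V z u + ⟪g, u⟫)
    (z1 : EuclideanSpace ℝ (Fin n)) (hz1Z : z1 ∈ Z)
    (hz1 : ∀ u ∈ Z, V z z1 + ⟪ghalf, z1⟫ ≤ V z u + ⟪ghalf, u⟫) :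
    ∀ u ∈ Z, ⟪ghalf, zhalf - u⟫ ≤
      V z u - V z1 u + 1 / 2 * lrNorm q (g - ghalf) ^ 2 - V z zhalf := by
  intro u hu
  obtain rfl : V = bregmanDiv d d' := funext₂ hV
  have hqp : q.HolderConjugate p :=
    Real.holderConjugate_iff.mpr ⟨by linarith, by simpa [one_div, add_comm] using hpq⟩
  have hprox_z1 :=
    inner_sub_le_bregmanDiv_of_isMinOn hZconvex (isMinOn_iff.2 hz1) hz1Z hu (hd z1)
  have hprox_zhalf :=
    inner_sub_le_bregmanDiv_of_isMinOn hZconvex (isMinOn_iff.2 hzhalf) hzhalfZ hz1Z (hd zhalf)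
  have hsc := half_le_bregmanDiv (hd zhalf) (hdsc z1 hz1Z zhalf hzhalfZ)
  have hholder := inner_le_lrNorm_mul_lrNorm hqp (g - ghalf) (z1 - zhalf)
  have hyoung := two_mul_le_add_sq (lrNorm q (g - ghalf)) (lrNorm p (z1 - zhalf))
  have hsplit : ⟪ghalf, zhalf - u⟫ =
      ⟪ghalf, z1 - u⟫ + ⟪g, zhalf - z1⟫ + ⟪g - ghalf, z1 - zhalf⟫ := by
    simp only [inner_sub_left, inner_sub_right]
    ring
  linarith

/-- Let `Z ⊆ ℝ^n` be closed convex, `p ∈ [1,2]`, `q ∈ [2,∞)` with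
`1/p + 1/q = 1`.  Let `d : ℝ^n → ℝ` be differentiable and 1-strongly convex w.r.t. `‖·‖_p`
on `Z`, with Bregman divergence `V(z,w) = d(w) − d(z) − ⟨∇d(z), w − z⟩`, and for `z ∈ Z`,
`g ∈ ℝ^n` let `prox_z(g)` be a minimizer over `u ∈ Z` of `V(z,u) + ⟨g,u⟩`.
If `z_{1/2} = prox_z(g)` and `z₁ = prox_z(g_{1/2})`, then for all `u ∈ Z`:
`⟨g_{1/2}, z_{1/2} − u⟩ ≤ V(z,u) − V(z₁,u) + (1/2)‖g − g_{1/2}‖_q² − V(z, z_{1/2})`. -/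
theorem prox_extragradient_lemma {n : ℕ} (hn : 1 ≤ n) (Z : Set (EuclideanSpace ℝ (Fin n)))
    (hZclosed : IsClosed Z) (hZconvex : Convex ℝ Z)
    (p q : ℝ) (hp : 1 ≤ p) (hp2 : p ≤ 2) (hq : 2 ≤ q) (hpq : 1 / p + 1 / q = 1)
    (d : EuclideanSpace ℝ (Fin n) → ℝ) (d' : EuclideanSpace ℝ (Fin n) → EuclideanSpace ℝ (Fin n))
    (hd : ∀ x, HasGradientAt d (d' x) x)
    (hdsc : ∀ z1 ∈ Z, ∀ z2 ∈ Z, ∀ t : ℝ, t ∈ Set.Icc (0 : ℝ) 1 →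
      d (t • z1 + (1 - t) • z2) ≤
        t * d z1 + (1 - t) * d z2 - t * (1 - t) / 2 * lrNorm p (z1 - z2) ^ 2)
    (V : EuclideanSpace ℝ (Fin n) → EuclideanSpace ℝ (Fin n) → ℝ)
    (hV : ∀ z w, V z w = d w - d z - ⟪d' z, w - z⟫)
    (z : EuclideanSpace ℝ (Fin n)) (hz : z ∈ Z) (g ghalf : EuclideanSpace ℝ (Fin n))
    (zhalf : EuclideanSpace ℝ (Fin n)) (hzhalfZ : zhalf ∈ Z)
    (hzhalf : ∀ u ∈ Z, V z zhalf + ⟪g, zhalf⟫ ≤ V z u + ⟪g, u⟫)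
    (z1 : EuclideanSpace ℝ (Fin n)) (hz1Z : z1 ∈ Z)
    (hz1 : ∀ u ∈ Z, V z z1 + ⟪ghalf, z1⟫ ≤ V z u + ⟪ghalf, u⟫) :
    ∀ u ∈ Z, ⟪ghalf, zhalf - u⟫ ≤
      V z u - V z1 u + 1 / 2 * lrNorm q (g - ghalf) ^ 2 - V z zhalf :=
  prox_extragradient_lemma_general Z hZconvex p q hq hpq d d' hd hdsc V hV z g ghalf zhalf hzhalfZ
    hzhalf z1 hz1Z hz1
end
end
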